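/- arXiv:2205.04953 — 2 statements merged into one kernel-verified Lean document; each statement's English description precedes it below -/
import Mathlib

section
/- For every k ≥ 1, every finite path has a consistent (k+1 : k)-colouring with clustering k. -/
open SimpleGraph

/-- The strong product of two simple graphs. -/
def strongProd {α β : Type*} (G : SimpleGraph α) (H : SimpleGraph β) :
    SimpleGraph (α × β) where
  Adj x y := x ≠ y ∧ (x.1 = y.1 ∨ G.Adj x.1 y.1) ∧ (x.2 = y.2 ∨ H.Adj x.2 y.2)
  symm := ⟨fun x y => by
    rintro ⟨h1, h2, h3⟩
    exact ⟨h1.symm, h2.imp Eq.symm (fun h => h.symm), h3.imp Eq.symm (fun h => h.symm)⟩⟩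
  loopless := ⟨fun x => by simp⟩

/-- The strong product of a family of simple graphs. -/
def strongProdPi {d : ℕ} {V : Fin d → Type*} (G : ∀ i, SimpleGraph (V i)) :
    SimpleGraph (∀ i, V i) where
  Adj x y := x ≠ y ∧ ∀ i, x i = y i ∨ (G i).Adj (x i) (y i)
  symm := ⟨fun x y ⟨h1, h2⟩ => ⟨h1.symm, fun i => (h2 i).imp Eq.symm (fun h => h.symm)⟩⟩
  loopless := ⟨fun x => by simp⟩

/-- Every connected component of the subgraph of `G` induced on `S` has at most `c`
vertices. -/
def ClusterBound {α : Type*} (G : SimpleGraph α) (S : Set α) (c : ℕ) : Prop :=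
  ∀ v : S, ((G.induce S).connectedComponentMk v).supp.ncard ≤ c

/-- `G` has a `k`-colouring with clustering `c`. -/
def HasClusteredColoring {α : Type*} (G : SimpleGraph α) (k c : ℕ) : Prop :=
  ∃ f : α → Fin k, ∀ i : Fin k, ClusterBound G {v | f v = i} c

/-- `f` is a `(p:q)`-colouring: each vertex gets a `q`-element subset of `Fin p`. -/
def IsPQColoring {α : Type*} (p q : ℕ) (f : α → Finset (Fin p)) : Prop :=
  ∀ v, (f v).card = q

/-- `f` is a proper `(p:q)`-colouring of `G`. -/
def IsProperPQColoring {α : Type*} (G : SimpleGraph α) (p q : ℕ)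
    (f : α → Finset (Fin p)) : Prop :=
  IsPQColoring p q f ∧ ∀ ⦃x y⦄, G.Adj x y → Disjoint (f x) (f y)

/-- The set-colouring `f` has clustering `c`: for each colour, each monochromatic
component has at most `c` vertices. -/
def PQClusterBound {α : Type*} (G : SimpleGraph α) {p : ℕ}
    (f : α → Finset (Fin p)) (c : ℕ) : Prop :=
  ∀ i : Fin p, ClusterBound G {v | i ∈ f v} c

/-- `G` has a `(p:q)`-colouring with clustering `c`. -/
def HasPQClusteredColoring {α : Type*} (G : SimpleGraph α) (p q c : ℕ) : Prop :=
  ∃ f : α → Finset (Fin p), IsPQColoring p q f ∧ PQClusterBound G f c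

/-- `ord` is a consistent `(p:q)`-colouring of `G` (each vertex's `q` colours are ordered,
with the `i`-th colour of `x` different from the `j`-th colour of `y` for every edge `xy`
and all distinct `i, j`). -/
def IsConsistentPQColoring {α : Type*} (G : SimpleGraph α) (p q : ℕ)
    (ord : α → Fin q → Fin p) : Prop :=
  (∀ v, Function.Injective (ord v)) ∧
    ∀ ⦃x y⦄, G.Adj x y → ∀ i j : Fin q, i ≠ j → ord x i ≠ ord y j

/-- The colour set of a vertex in an ordered colouring. -/
def ordColors {α : Type*} {p q : ℕ} (ord : α → Fin q → Fin p) (v : α) : Finset (Fin p) :=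
  Finset.image (ord v) Finset.univ

/-- `G` has a consistent `(p:q)`-colouring with clustering `c`. -/
def HasConsistentClusteredColoring {α : Type*} (G : SimpleGraph α) (p q c : ℕ) : Prop :=
  ∃ ord : α → Fin q → Fin p, IsConsistentPQColoring G p q ord ∧
    PQClusterBound G (ordColors ord) c

/-- The fractional chromatic number of `G`: the infimum of `p/q` over proper
`(p:q)`-colourings of `G`. -/
noncomputable def fracChrom {α : Type*} (G : SimpleGraph α) : ℝ :=
  sInf {t : ℝ | ∃ p q : ℕ, 0 < q ∧
    (∃ f : α → Finset (Fin p), IsProperPQColoring G p q f) ∧ t = (p : ℝ) / q}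

/-- The independence number of `G`. -/
noncomputable def indepNum {α : Type*} (G : SimpleGraph α) : ℕ :=
  sSup {n | ∃ s : Finset α, (∀ x ∈ s, ∀ y ∈ s, ¬ G.Adj x y) ∧ s.card = n}

/-!
Vertex `v` of the path gets every colour of `Fin (k + 1)` except `v mod (k + 1)`. Colour `c` is
then missing exactly at the vertices `≡ c`, so its monochromatic components are runs of at most
`k` consecutive vertices. Going from `v` to `v + 1`, the colour `v + 1` leaves and the colour `v`
arrives; letting the arriving colour take over the slot of the leaving one, i.e. composing the
ordering with the transposition of the two, makes the ordered colouring consistent.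
-/

theorem ClusterBound.of_invariant {α β : Type*} {G : SimpleGraph α} {S : Set α} {c : ℕ}
    (q : α → β) (r : α → ℕ) (hq : ∀ ⦃x y⦄, x ∈ S → y ∈ S → G.Adj x y → q x = q y)
    (hr : ∀ x ∈ S, r x < c) (hqr : ∀ ⦃x y⦄, x ∈ S → y ∈ S → q x = q y → r x = r y → x = y) :
    ClusterBound G S c := by
  intro v
  have hreach : ∀ {x y : S}, (G.induce S).Reachable x y → q x = q y := by
    rintro x y ⟨p⟩
    induction p with
    | nil => rfl
    | cons hadj _ ih => exact (hq (Subtype.prop _) (Subtype.prop _) hadj).trans ih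
  have hqv : ∀ x ∈ ((G.induce S).connectedComponentMk v).supp, q x = q v := fun x hx =>
    hreach (ConnectedComponent.exact hx)
  calc ((G.induce S).connectedComponentMk v).supp.ncard ≤ (Set.Iio c).ncard :=
        Set.ncard_le_ncard_of_injOn (fun x : S => r x) (fun x _ => hr x x.2)
          (fun x hx y hy hxy => Subtype.ext (hqr x.2 y.2 ((hqv x hx).trans (hqv y hy).symm) hxy))
          (Set.finite_Iio c)
    _ = c := by simp [← Finset.coe_Iio, Set.ncard_coe_finset]

theorem Nat.dvd_add_sub_iff_mod_eq {d c w : ℕ} (hc : c < d) : d ∣ w + (d - c) ↔ w % d = c := by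
  conv_rhs => rw [← Nat.mod_eq_of_lt hc, ← Nat.ModEq, Nat.modEq_iff_dvd, ← dvd_neg]
  rw [← Int.natCast_dvd_natCast, Nat.cast_add, Nat.cast_sub hc.le, neg_sub,
    show (w : ℤ) + (d - c) = w - c + d by ring, dvd_add_self_right]

theorem Function.Injective.eq_of_apply_eq_swap_apply {ι α : Type*} [DecidableEq α] {f : ι → α}
    (hf : Function.Injective f) {a b : α} (ha : a ∉ Set.range f) {i j : ι}
    (h : f i = Equiv.swap a b (f j)) : i = j := by
  refine hf ?_
  rcases eq_or_ne (f j) b with hb | hb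
  · rw [hb, Equiv.swap_apply_right] at h
    exact absurd ⟨i, h⟩ ha
  · rwa [Equiv.swap_apply_of_ne_of_ne (fun h' => ha ⟨j, h'⟩) hb] at h

open Fin.NatCast

def pathOrd (k : ℕ) : ℕ → Fin k → Fin (k + 1)
  | 0 => Fin.succ
  | v + 1 => Equiv.swap (v : Fin (k + 1)) ((v + 1 : ℕ) : Fin (k + 1)) ∘ pathOrd k v

theorem pathOrd_injective (k v : ℕ) : Function.Injective (pathOrd k v) := by
  induction v with
  | zero => exact Fin.succ_injective k
  | succ v ih => exact (Equiv.injective _).comp ih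

theorem range_pathOrd (k v : ℕ) : Set.range (pathOrd k v) = {(v : Fin (k + 1))}ᶜ := by
  induction v with
  | zero => exact Fin.range_succ k
  | succ v ih =>
    rw [pathOrd, Set.range_comp, ih, Set.image_compl_eq (Equiv.bijective _), Set.image_singleton,
      Equiv.swap_apply_left]

theorem pathOrd_ne_pathOrd_succ (k v : ℕ) {i j : Fin k} (hij : i ≠ j) :
    pathOrd k v i ≠ pathOrd k (v + 1) j := fun h =>
  hij ((pathOrd_injective k v).eq_of_apply_eq_swap_apply (by simp [range_pathOrd]) h)

theorem isConsistentPQColoring_pathOrd (n k : ℕ) :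
    IsConsistentPQColoring (pathGraph n) (k + 1) k (fun v => pathOrd k v) := by
  refine ⟨fun v => pathOrd_injective k v, fun x y hxy i j hij => ?_⟩
  rcases pathGraph_adj.mp hxy with h | h
  · simpa only [← h] using pathOrd_ne_pathOrd_succ k x hij
  · simpa only [← h] using (pathOrd_ne_pathOrd_succ k y hij.symm).symm

theorem mem_ordColors_pathOrd {n k : ℕ} (c : Fin (k + 1)) (w : Fin n) :
    c ∈ ordColors (fun v : Fin n => pathOrd k v) w ↔ (w : ℕ) % (k + 1) ≠ c := by
  simp only [ordColors, Finset.mem_image, Finset.mem_univ, true_and]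
  rw [← Set.mem_range, range_pathOrd, Set.mem_compl_singleton_iff, ne_comm, Ne, Fin.ext_iff,
    Fin.val_natCast]

/-- Shifted by `k - c`, the vertices `≡ c` become the last ones of the blocks of `k + 1`
consecutive integers; the block number is constant along runs of colour `c`, and the
position inside the block is never the last one. -/
theorem clusterBound_pathGraph_mod_ne (n : ℕ) {k c : ℕ} (hc : c ≤ k) :
    ClusterBound (pathGraph n) {w : Fin n | (w : ℕ) % (k + 1) ≠ c} k := by
  have hdvd : ∀ w : ℕ, w % (k + 1) ≠ c → ¬ (k + 1) ∣ w + (k - c) + 1 := fun w hw h =>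
    hw ((Nat.dvd_add_sub_iff_mod_eq (Nat.lt_succ_of_le hc)).mp
      (by rwa [show w + (k - c) + 1 = w + (k + 1 - c) by omega] at h))
  refine ClusterBound.of_invariant (fun w : Fin n => (w + (k - c)) / (k + 1))
    (fun w => (w + (k - c)) % (k + 1)) (fun x y hx hy hxy => ?_) (fun x hx => ?_)
    (fun x y _ _ hq hr => ?_)
  · rcases pathGraph_adj.mp hxy with h | h
    · rw [← h, add_right_comm, Nat.succ_div_of_not_dvd (hdvd x hx)]
    · rw [← h, add_right_comm, Nat.succ_div_of_not_dvd (hdvd y hy)]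
  · have hlt : (x + (k - c)) % (k + 1) < k + 1 := Nat.mod_lt _ k.succ_pos
    have hne : (x + (k - c)) % (k + 1) ≠ k := fun h =>
      hdvd x hx (Nat.dvd_of_mod_eq_zero (by rw [← Nat.mod_add_mod, h, Nat.mod_self]))
    omega
  · have hx := Nat.div_add_mod (x + (k - c)) (k + 1)
    have hy := Nat.div_add_mod (y + (k - c)) (k + 1)
    rw [hq, hr] at hx
    exact Fin.ext (by omega)

theorem stmt12_general (n k : ℕ) :
    HasConsistentClusteredColoring (SimpleGraph.pathGraph n) (k + 1) k k := by
  refine ⟨fun v => pathOrd k v, isConsistentPQColoring_pathOrd n k, fun c => ?_⟩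
  have hS : {w | c ∈ ordColors (fun v : Fin n => pathOrd k v) w} =
      {w : Fin n | (w : ℕ) % (k + 1) ≠ c} :=
    Set.ext (mem_ordColors_pathOrd c)
  rw [hS]
  exact clusterBound_pathGraph_mod_ne n (Nat.lt_succ_iff.mp c.isLt)

theorem stmt12 (n k : ℕ) (hk : 1 ≤ k) :
    HasConsistentClusteredColoring (SimpleGraph.pathGraph n) (k + 1) k k :=
  stmt12_general n k
end

section
/- For every d ≥ 1 and n ≥ 1, the d-fold strong product of n-vertex paths ⊠_d P_n has a (d+1)-colouring with clustering d!. -/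
open SimpleGraph

/-!
Induction on `d`, splitting off one path: `⊠_{d+1} P_n ≅ P_n ⊠ (⊠_d P_n)`. Given a `k`-colouring
of `G` with clustering `c`, colour the copy of `G` on layer `t` of `P_n ⊠ G` injectively by the
`k` colours of `Fin (k + 1)` other than `t mod (k + 1)`, changing the assignment between
consecutive layers only for the class whose colour becomes forbidden, which takes the colour just
freed. Then two adjacent
vertices of equal colour come from the same colour class of `G`, so a monochromatic component
projects into one monochromatic component of `G`; and colour `j` is absent from the layers
`t ≡ j`, so the component meets at most `k` consecutive layers. This gives clustering `k * c`,
and `(d + 1) * d! = (d + 1)!`.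
-/

open Function

theorem Nat.not_dvd_add_sub_add_one_of_mod_ne {k r t : ℕ} (hr : r ≤ k) (ht : t % (k + 1) ≠ r) :
    ¬ k + 1 ∣ t + (k - r) + 1 := by
  intro hdvd
  have ht0 : t + (k - r + 1) ≡ 0 [MOD k + 1] := Nat.modEq_zero_iff_dvd.2 (by rwa [← add_assoc])
  have hr0 : r + (k - r + 1) ≡ 0 [MOD k + 1] := Nat.modEq_zero_iff_dvd.2 ⟨1, by omega⟩
  exact ht (Eq.trans (Nat.ModEq.add_right_cancel' _ (ht0.trans hr0.symm))
    (Nat.mod_eq_of_lt (by omega)))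

theorem Nat.add_one_add_sub_div_eq_of_mod_ne {k r t : ℕ} (hr : r ≤ k) (ht : t % (k + 1) ≠ r) :
    (t + 1 + (k - r)) / (k + 1) = (t + (k - r)) / (k + 1) := by
  rw [add_right_comm, Nat.succ_div_of_not_dvd (Nat.not_dvd_add_sub_add_one_of_mod_ne hr ht)]

theorem Nat.add_sub_mod_lt_of_mod_ne {k r t : ℕ} (hr : r ≤ k) (ht : t % (k + 1) ≠ r) :
    (t + (k - r)) % (k + 1) < k := by
  refine lt_of_le_of_ne (Nat.le_of_lt_succ (Nat.mod_lt _ k.succ_pos)) fun h => ?_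
  refine Nat.not_dvd_add_sub_add_one_of_mod_ne hr ht ⟨(t + (k - r)) / (k + 1) + 1, ?_⟩
  have := Nat.div_add_mod (t + (k - r)) (k + 1)
  rw [mul_add]
  omega

theorem Nat.add_sub_div_eq_of_mod_ne {k r a b : ℕ} (hr : r ≤ k) (ha : a % (k + 1) ≠ r)
    (hb : b % (k + 1) ≠ r) (hab : a ≤ b + 1) (hba : b ≤ a + 1) :
    (a + (k - r)) / (k + 1) = (b + (k - r)) / (k + 1) := by
  obtain rfl | rfl | rfl : b = a ∨ b = a + 1 ∨ a = b + 1 := by omega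
  · rfl
  · exact (Nat.add_one_add_sub_div_eq_of_mod_ne hr ha).symm
  · exact Nat.add_one_add_sub_div_eq_of_mod_ne hr hb

/-- On layer `t`, the `m` colour classes of the base graph receive all colours but `t`; from layer
`t` to layer `t + 1` only the class sitting on the colour `t + 1` moves, onto the colour `t` that
was free on layer `t`. -/
def skipColor (m : ℕ) : ℕ → Fin m → Fin (m + 1)
  | 0 => Fin.succ
  | t + 1 => fun i =>
      if skipColor m t i = Fin.ofNat (m + 1) (t + 1) then Fin.ofNat (m + 1) t else skipColor m t i

theorem skipColor_ne (m t : ℕ) (i : Fin m) : skipColor m t i ≠ Fin.ofNat (m + 1) t := by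
  cases t with
  | zero => simp [skipColor]
  | succ t =>
    simp only [skipColor]
    split_ifs with h
    · intro heq
      have : 0 ≡ 1 [MOD m + 1] := Nat.ModEq.add_left_cancel' t (congrArg Fin.val heq)
      have hm := i.pos
      rw [Nat.ModEq, Nat.zero_mod, Nat.mod_eq_of_lt (by omega : 1 < m + 1)] at this
      omega
    · exact h

theorem skipColor_injective (m t : ℕ) : Injective (skipColor m t) := by
  induction t with
  | zero => exact Fin.succ_injective m
  | succ t ih =>
    intro i j h
    simp only [skipColor] at h
    split_ifs at h with hi hj hj
    · exact ih (hi.trans hj.symm)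
    · exact absurd h.symm (skipColor_ne m t j)
    · exact absurd h (skipColor_ne m t i)
    · exact ih h

theorem eq_of_skipColor_eq_skipColor_succ {m t : ℕ} {i j : Fin m}
    (h : skipColor m t i = skipColor m (t + 1) j) : i = j := by
  simp only [skipColor] at h
  split_ifs at h
  · exact absurd h (skipColor_ne m t i)
  · exact skipColor_injective m t h

theorem eq_of_skipColor_eq {m t t' : ℕ} (ht : t ≤ t' + 1) (ht' : t' ≤ t + 1) {i j : Fin m}
    (h : skipColor m t i = skipColor m t' j) : i = j := by
  obtain rfl | rfl | rfl : t' = t ∨ t' = t + 1 ∨ t = t' + 1 := by omega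
  · exact skipColor_injective m _ h
  · exact eq_of_skipColor_eq_skipColor_succ h
  · exact (eq_of_skipColor_eq_skipColor_succ h.symm).symm

theorem hasClusteredColoring_one_natCard {α : Type*} [Finite α] (G : SimpleGraph α) :
    HasClusteredColoring G 1 (Nat.card α) :=
  ⟨fun _ => 0, fun _ _ => (Set.ncard_le_card _).trans (Finite.card_subtype_le _)⟩

theorem HasClusteredColoring.of_injective_hom {α β : Type*} [Finite β] {G : SimpleGraph α}
    {H : SimpleGraph β} {k c : ℕ} (φ : G →g H) (hφ : Injective φ)
    (h : HasClusteredColoring H k c) : HasClusteredColoring G k c := by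
  obtain ⟨f, hf⟩ := h
  refine ⟨f ∘ φ, fun i v => ?_⟩
  let ψ : G.induce {x | f (φ x) = i} →g H.induce {y | f y = i} :=
    ⟨fun x => ⟨φ x, x.2⟩, fun hxy => φ.map_adj hxy⟩
  have hψ : Injective ψ := fun x y hxy => Subtype.ext (hφ (congrArg Subtype.val hxy))
  refine (Set.ncard_le_ncard_of_injOn ψ (fun w hw => ?_) hψ.injOn).trans (hf i (ψ v))
  rw [ConnectedComponent.mem_supp_iff, ConnectedComponent.eq] at hw ⊢
  exact hw.map ψ

def strongProdPiSuccIso {d : ℕ} {V : Fin (d + 1) → Type*} (G : ∀ i, SimpleGraph (V i)) :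
    strongProdPi G ≃g strongProd (G 0) (strongProdPi fun i => G i.succ) where
  toEquiv := (Fin.consEquiv V).symm
  map_rel_iff' {x y} := by
    have hne : (x 0, Fin.tail x) ≠ (y 0, Fin.tail y) ↔ x ≠ y :=
      (Fin.consEquiv V).symm.injective.ne_iff
    simp only [strongProd, strongProdPi, Fin.consEquiv_symm_apply, hne, Fin.forall_fin_succ]
    refine and_congr_right fun _ => and_congr_right fun _ => ⟨?_, fun h => ?_⟩
    · rintro (h | ⟨-, h⟩)
      · exact fun i => .inl (congrFun h i)
      · exact h
    · exact (em _).imp_right fun hne => ⟨hne, h⟩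

theorem strongProd_pathGraph_adj {α : Type*} {G : SimpleGraph α} {n : ℕ} {x y : Fin n × α}
    (h : (strongProd (pathGraph n) G).Adj x y) :
    ((x.1 : ℕ) ≤ y.1 + 1 ∧ (y.1 : ℕ) ≤ x.1 + 1) ∧ (x.2 = y.2 ∨ G.Adj x.2 y.2) := by
  obtain ⟨-, h1 | h1, h2⟩ := h
  · exact ⟨by rw [h1]; omega, h2⟩
  · exact ⟨by rw [pathGraph_adj] at h1; omega, h2⟩

section LayerColoring

variable {α : Type*} {G : SimpleGraph α} {k n : ℕ}

def layerColoring (f : α → Fin k) (x : Fin n × α) : Fin (k + 1) :=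
  skipColor k x.1 (f x.2)

theorem mod_ne_of_layerColoring_eq {f : α → Fin k} {x : Fin n × α} {j : Fin (k + 1)}
    (hx : layerColoring f x = j) : (x.1 : ℕ) % (k + 1) ≠ j := fun h =>
  skipColor_ne k x.1 (f x.2) (hx.trans (Fin.ext (by simp [h])))

/-- `(t + (k - j)) / (k + 1)` numbers the slabs of layers between two consecutive layers
`t ≡ j [MOD k + 1]`, on which the colour `j` is absent. -/
theorem reachable_of_reachable_induce_layerColoring (f : α → Fin k) (j : Fin (k + 1))
    {v w : {x : Fin n × α | layerColoring f x = j}}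
    (h : ((strongProd (pathGraph n) G).induce {x | layerColoring f x = j}).Reachable w v) :
    ∃ hw : f w.1.2 = f v.1.2,
      (G.induce {a | f a = f v.1.2}).Reachable ⟨w.1.2, hw⟩ ⟨v.1.2, rfl⟩ ∧
      (w.1.1 + (k - j)) / (k + 1) = (v.1.1 + (k - j)) / (k + 1) := by
  obtain ⟨p⟩ := h
  induction p with
  | nil => exact ⟨rfl, .rfl, rfl⟩
  | @cons a b u hab _ ih =>
    obtain ⟨hbu, hb, hblock⟩ := ih
    obtain ⟨⟨hab₁, hba₁⟩, hG⟩ := strongProd_pathGraph_adj hab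
    have hfab : f a.1.2 = f b.1.2 := eq_of_skipColor_eq hab₁ hba₁ (a.2.trans b.2.symm)
    have hstep : (G.induce {a | f a = f u.1.2}).Reachable ⟨a.1.2, hfab.trans hbu⟩ ⟨b.1.2, hbu⟩ := by
      rcases hG with hG | hG
      · exact (Subtype.ext hG : (⟨a.1.2, _⟩ : {a | f a = f u.1.2}) = ⟨b.1.2, hbu⟩) ▸ .rfl
      · exact Adj.reachable hG
    refine ⟨hfab.trans hbu, hstep.trans hb, Eq.trans ?_ hblock⟩
    exact Nat.add_sub_div_eq_of_mod_ne j.is_le (mod_ne_of_layerColoring_eq a.2)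
      (mod_ne_of_layerColoring_eq b.2) hab₁ hba₁

end LayerColoring

theorem HasClusteredColoring.strongProd_pathGraph {α : Type*} [Finite α] {G : SimpleGraph α}
    {k c : ℕ} (h : HasClusteredColoring G k c) (n : ℕ) :
    HasClusteredColoring (strongProd (pathGraph n) G) (k + 1) (k * c) := by
  obtain ⟨f, hf⟩ := h
  refine ⟨layerColoring f, fun j v => ?_⟩
  set C := (G.induce {a | f a = f v.1.2}).connectedComponentMk ⟨v.1.2, rfl⟩
  -- a vertex of the component is determined by its `G`-coordinate and its offset in the slab
  calc _ ≤ ((Finset.range k : Set ℕ) ×ˢ (Subtype.val '' C.supp)).ncard := by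
        refine Set.ncard_le_ncard_of_injOn (fun w => ((w.1.1 + (k - j)) % (k + 1), w.1.2))
          (fun w hw => ?_) (fun w hw w' hw' heq => ?_)
          ((Finset.range k).finite_toSet.prod (Set.toFinite _))
        · rw [ConnectedComponent.mem_supp_iff, ConnectedComponent.eq] at hw
          obtain ⟨hwv, hr, -⟩ := reachable_of_reachable_induce_layerColoring f j hw
          refine ⟨Finset.mem_range.2 ?_, ⟨_, hwv⟩,
            (ConnectedComponent.mem_supp_iff _ _).2 (ConnectedComponent.eq.2 hr), rfl⟩
          exact Nat.add_sub_mod_lt_of_mod_ne j.is_le (mod_ne_of_layerColoring_eq w.2)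
        · rw [ConnectedComponent.mem_supp_iff, ConnectedComponent.eq] at hw hw'
          obtain ⟨-, -, hb⟩ := reachable_of_reachable_induce_layerColoring f j hw
          obtain ⟨-, -, hb'⟩ := reachable_of_reachable_induce_layerColoring f j hw'
          obtain ⟨hoff, hα⟩ := Prod.mk.inj heq
          have ht := Nat.ext_div_modEq (hb.trans hb'.symm) hoff
          exact Subtype.ext (Prod.ext (Fin.ext (Nat.add_right_cancel ht)) hα)
    _ = k * C.supp.ncard := by
        rw [Set.ncard_prod, Set.ncard_coe_finset, Finset.card_range,
          Set.ncard_image_of_injective _ Subtype.val_injective]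
    _ ≤ k * c := Nat.mul_le_mul_left k (hf _ _)

theorem stmt15_general (d n : ℕ) :
    HasClusteredColoring
      (strongProdPi (fun _ : Fin d => SimpleGraph.pathGraph n)) (d + 1)
      (Nat.factorial d) := by
  induction d with
  | zero =>
    simpa using hasClusteredColoring_one_natCard (strongProdPi fun _ : Fin 0 => pathGraph n)
  | succ d ih =>
    have h := ih.strongProd_pathGraph n
    rw [← Nat.factorial_succ] at h
    let e := strongProdPiSuccIso (fun _ : Fin (d + 1) => SimpleGraph.pathGraph n)
    exact h.of_injective_hom e.toHom e.injective

theorem stmt15 (d n : ℕ) (hd : 1 ≤ d) (hn : 1 ≤ n) :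
    HasClusteredColoring
      (strongProdPi (fun _ : Fin d => SimpleGraph.pathGraph n)) (d + 1)
      (Nat.factorial d) :=
  stmt15_general d n
end
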